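/- arXiv:2202.02975 — 2 statements merged into one kernel-verified Lean document; each statement's English description precedes it below -/
import Mathlib

section
/- Fix θ ≥ 1, C > 0, p_min > 0, p_max = θ·p_min. For any sequence of concave, differentiable, increasing revenue functions g_t : [0, δ_t] → ℝ with g_t(0) = 0 and g_t' ∈ [p_min, p_max], and any π ≥ 1, the total allocation of the CR-Pursuit(π) algorithm (defined by g_t(v̂_t) = (1/π)(OPT(t) − OPT(t−1)) where OPT(t) is the offline optimum up to slot t with capacity C and rate limits δ_t) satisfies Σ_t v̂_t ≤ ((ln θ + 1)/π) · C. -/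
/-!
Write `Δ_t = OPT(t) - OPT(t-1)` and let `w_t` solve `g_t(w_t) = Δ_t`. Since `g_t` is concave with
`g_t(0) = 0`, the pursuit rule `g_t(v̂_t) = Δ_t / π` forces `π v̂_t ≤ w_t`.

The amounts `w_t` are charged to the potential
`Ψ_t = OPT(t) / pmin - ∫_{pmin}^{pmax} L_t(u) / u² du`, where `L_t(u)` is the optimal surplus
(revenue minus `u` times allocation) of the first `t` slots. The increment
`L_t(u) - L_{t-1}(u)` is at most `Δ_t`, because the marginal value of capacity only grows with
`t`, and at most the surplus of slot `t` alone; together these bound it by the revenue that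
slot `t` earns on `[0, w_t]` at marginal prices `≥ u`. Integrating against `du / u²` and
exchanging the two integrals gives `∫ (L_t - L_{t-1}) / u² ≤ g_t(w_t) / pmin - w_t`, that is
`Ψ_t - Ψ_{t-1} ≥ w_t`. Finally `L_T(u) ≥ OPT(T) - u C` gives
`Ψ_T ≤ OPT(T) / pmax + C ln θ ≤ (ln θ + 1) C`.
-/

open Set MeasureTheory intervalIntegral

section Concave

variable {S : Set ℝ} {f f' : ℝ → ℝ}

theorem ConcaveOn.le_add_mul_sub_of_hasDerivWithinAt (hf : ConcaveOn ℝ S f) {x y d : ℝ}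
    (hx : x ∈ S) (hy : y ∈ S) (hd : HasDerivWithinAt f d S x) :
    f y ≤ f x + d * (y - x) := by
  rcases lt_trichotomy y x with hyx | rfl | hxy
  · have := hf.le_slope_of_hasDerivWithinAt hy hx hyx hd
    rw [slope_def_field, le_div_iff₀ (sub_pos.2 hyx)] at this
    linarith
  · simp
  · have := hf.slope_le_of_hasDerivWithinAt hx hy hxy hd
    rw [slope_def_field, div_le_iff₀ (sub_pos.2 hxy)] at this
    linarith

theorem ConcaveOn.antitoneOn_of_hasDerivWithinAt (hf : ConcaveOn ℝ S f)
    (hder : ∀ x ∈ S, HasDerivWithinAt f (f' x) S x) : AntitoneOn f' S := by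
  intro x hx y hy hxy
  rcases hxy.eq_or_lt with rfl | hxy
  · rfl
  · exact (hf.le_slope_of_hasDerivWithinAt hx hy hxy (hder y hy)).trans
      (hf.slope_le_of_hasDerivWithinAt hx hy hxy (hder x hx))

theorem ConcaveOn.map_add_map_le_of_mem_Icc (hf : ConcaveOn ℝ S f) {a b d : ℝ}
    (ha : a ∈ S) (hd : d ∈ S) (hb : b ∈ Icc a d) :
    f a + f d ≤ f b + f (a + d - b) := by
  rcases hb.1.eq_or_lt with rfl | hab
  · simp
  set s := (d - b) / (d - a)
  have had : 0 < d - a := by linarith [hb.2]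
  have hs : s * (d - a) = d - b := div_mul_cancel₀ _ had.ne'
  have hs0 : 0 ≤ s := div_nonneg (by linarith [hb.2]) had.le
  have hs1 : 0 ≤ 1 - s := by
    rw [sub_nonneg, div_le_one had]; linarith
  have h1 := hf.2 ha hd hs0 hs1 (by ring)
  have h2 := hf.2 ha hd hs1 hs0 (by ring)
  simp only [smul_eq_mul] at h1 h2
  rw [show s * a + (1 - s) * d = b by linear_combination -hs] at h1
  rw [show (1 - s) * a + s * d = a + d - b by linear_combination hs] at h2
  linarith

theorem ConcaveOn.integral_eq_sub_of_hasDerivWithinAt (hf : ConcaveOn ℝ S f)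
    (hder : ∀ x ∈ S, HasDerivWithinAt f (f' x) S x) {a b : ℝ} (hab : a ≤ b)
    (hS : Icc a b ⊆ S) : ∫ x in a..b, f' x = f b - f a := by
  refine integral_eq_sub_of_hasDeriv_right_of_le hab
    (fun x hx => (hder x (hS hx)).continuousWithinAt.mono hS) (fun x hx => ?_) ?_
  · have hnhds : S ∈ nhds x := Filter.mem_of_superset (Icc_mem_nhds hx.1 hx.2) hS
    exact ((hder x (hS (Ioo_subset_Icc_self hx))).hasDerivAt hnhds).hasDerivWithinAt
  · exact ((hf.antitoneOn_of_hasDerivWithinAt hder).mono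
      (by rwa [uIcc_of_le hab])).intervalIntegrable

end Concave

theorem AntitoneOn.intervalIntegrable_div_sq {f : ℝ → ℝ} {a b : ℝ} (ha : 0 < a) (hab : a ≤ b)
    (hf : AntitoneOn f (Icc a b)) : IntervalIntegrable (fun u => f u / u ^ 2) volume a b := by
  rw [← uIcc_of_le hab] at hf
  refine hf.intervalIntegrable.mul_continuousOn (f := f) (g := fun u => (u ^ 2)⁻¹) ?_
  refine ContinuousOn.inv₀ (by fun_prop) fun x hx => ?_
  rw [uIcc_of_le hab] at hx
  exact pow_ne_zero 2 (ha.trans_le hx.1).ne'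

theorem integral_ite_le_div_sq {a b q : ℝ} (ha : 0 < a) (hq : q ∈ Icc a b) :
    ∫ u in a..b, (if u ≤ q then q / u ^ 2 else 0) = q / a - 1 := by
  have hq0 : 0 < q := ha.trans_le hq.1
  have hind : (fun u => if u ≤ q then q / u ^ 2 else 0) =
      (Iic q).indicator (fun u => q / u ^ 2) := by
    ext u; simp [indicator_apply]
  have hderiv : ∀ u ∈ uIcc a q, HasDerivAt (fun u => -(q * u⁻¹)) (q / u ^ 2) u := by
    intro u hu
    rw [uIcc_of_le hq.1] at hu
    have hu0 : u ≠ 0 := (ha.trans_le hu.1).ne'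
    exact ((hasDerivAt_inv hu0).const_mul q).neg.congr_deriv (by field_simp)
  have hcont : IntervalIntegrable (fun u => q / u ^ 2) volume a q := by
    refine ContinuousOn.intervalIntegrable (ContinuousOn.div continuousOn_const (by fun_prop) ?_)
    intro u hu
    rw [uIcc_of_le hq.1] at hu
    exact pow_ne_zero 2 (ha.trans_le hu.1).ne'
  rw [hind, integral_of_le (hq.1.trans hq.2), setIntegral_indicator measurableSet_Iic,
    Ioc_inter_Iic, min_eq_right hq.2, ← integral_of_le hq.1,
    integral_eq_sub_of_hasDerivAt hderiv hcont]
  field_simp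
  ring

theorem integrableOn_ite_div_sq {φ : ℝ → ℝ} (hφ : Measurable φ) {a b : ℝ} (ha : 0 < a)
    (hab : a ≤ b) (hφ_mem : ∀ y, φ y ∈ Icc a b) (c d : ℝ) :
    IntegrableOn (Function.uncurry fun u y => if u ≤ φ y then φ y / u ^ 2 else 0)
      (uIoc a b ×ˢ uIoc c d) := by
  refine Measure.integrableOn_of_bounded (M := b / a ^ 2) ?_ ?_ ?_
  · exact ((measure_mono (prod_mono uIoc_subset_uIcc uIoc_subset_uIcc)).trans_lt
      (isCompact_uIcc.prod isCompact_uIcc).measure_lt_top).ne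
  · exact (Measurable.ite (measurableSet_le measurable_fst (hφ.comp measurable_snd))
      ((hφ.comp measurable_snd).div (measurable_fst.pow_const 2))
      measurable_const).aestronglyMeasurable
  · refine ae_restrict_of_forall_mem (measurableSet_uIoc.prod measurableSet_uIoc) ?_
    rintro ⟨u, y⟩ ⟨hu, -⟩
    rw [uIoc_of_le hab] at hu
    have hb : 0 ≤ b := ha.le.trans hab
    simp only [Function.uncurry]
    split_ifs
    · rw [Real.norm_of_nonneg (div_nonneg (ha.le.trans (hφ_mem y).1) (sq_nonneg u))]
      exact div_le_div₀ hb (hφ_mem y).2 (by positivity) (pow_le_pow_left₀ ha.le hu.1.le 2)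
    · simpa using div_nonneg hb (sq_nonneg a)

theorem integral_sub_mul_div_sq {a b R C : ℝ} (ha : 0 < a) (hab : a ≤ b) :
    ∫ u in a..b, (R - u * C) / u ^ 2 = R / a - R / b - C * Real.log (b / a) := by
  have hpos : ∀ u ∈ uIcc a b, 0 < u := fun u hu => by
    rw [uIcc_of_le hab] at hu; exact ha.trans_le hu.1
  have hderiv : ∀ u ∈ uIcc a b,
      HasDerivAt (fun u => -(R * u⁻¹) - C * Real.log u) ((R - u * C) / u ^ 2) u := by
    intro u hu
    have hu0 := (hpos u hu).ne'
    exact (((hasDerivAt_inv hu0).const_mul R).neg.sub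
      ((Real.hasDerivAt_log hu0).const_mul C)).congr_deriv (by field_simp)
  have hcont : IntervalIntegrable (fun u => (R - u * C) / u ^ 2) volume a b :=
    ContinuousOn.intervalIntegrable
      (ContinuousOn.div (by fun_prop) (by fun_prop) fun u hu => (pow_pos (hpos u hu) 2).ne')
  rw [integral_eq_sub_of_hasDerivAt hderiv hcont,
    Real.log_div (ha.trans_le hab).ne' ha.ne']
  ring

theorem sum_Icc_le_sub_of_forall_le_sub {x Ψ : ℕ → ℝ} {T : ℕ}
    (h : ∀ t < T, x (t + 1) ≤ Ψ (t + 1) - Ψ t) :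
    ∑ t ∈ Finset.Icc 1 T, x t ≤ Ψ T - Ψ 0 := by
  induction T with
  | zero => simp
  | succ T ih =>
    rw [Finset.sum_Icc_succ_top (Nat.le_add_left 1 T)]
    linarith [ih fun t ht => h t (ht.trans T.lt_succ_self), h T T.lt_succ_self]

structure IsRevenueFunction (G G' : ℝ → ℝ) (d pmin pmax : ℝ) : Prop where
  nonneg : 0 ≤ d
  concaveOn : ConcaveOn ℝ (Icc 0 d) G
  map_zero : G 0 = 0
  hasDerivWithinAt : ∀ x ∈ Icc 0 d, HasDerivWithinAt G (G' x) (Icc 0 d) x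
  deriv_mem : ∀ x ∈ Icc 0 d, G' x ∈ Icc pmin pmax

noncomputable def revenueAbove (G' : ℝ → ℝ) (w u : ℝ) : ℝ :=
  ∫ y in (0 : ℝ)..w, if u ≤ G' y then G' y else 0

namespace IsRevenueFunction

variable {G G' : ℝ → ℝ} {d pmin pmax w u : ℝ}

theorem zero_mem (hG : IsRevenueFunction G G' d pmin pmax) : (0 : ℝ) ∈ Icc 0 d :=
  ⟨le_rfl, hG.nonneg⟩

theorem pmin_le_pmax (hG : IsRevenueFunction G G' d pmin pmax) : pmin ≤ pmax :=
  (hG.deriv_mem 0 hG.zero_mem).1.trans (hG.deriv_mem 0 hG.zero_mem).2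

theorem le_add_mul_sub (hG : IsRevenueFunction G G' d pmin pmax) {x y : ℝ}
    (hx : x ∈ Icc 0 d) (hy : y ∈ Icc 0 d) : G y ≤ G x + G' x * (y - x) :=
  hG.concaveOn.le_add_mul_sub_of_hasDerivWithinAt hx hy (hG.hasDerivWithinAt x hx)

theorem antitoneOn_deriv (hG : IsRevenueFunction G G' d pmin pmax) : AntitoneOn G' (Icc 0 d) :=
  hG.concaveOn.antitoneOn_of_hasDerivWithinAt hG.hasDerivWithinAt

theorem continuousOn (hG : IsRevenueFunction G G' d pmin pmax) : ContinuousOn G (Icc 0 d) :=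
  fun x hx => (hG.hasDerivWithinAt x hx).continuousWithinAt

theorem le_mul (hG : IsRevenueFunction G G' d pmin pmax) {x : ℝ} (hx : x ∈ Icc 0 d) :
    G x ≤ pmax * x := by
  have := hG.le_add_mul_sub hG.zero_mem hx
  rw [hG.map_zero, zero_add, sub_zero] at this
  exact this.trans (mul_le_mul_of_nonneg_right (hG.deriv_mem 0 hG.zero_mem).2 hx.1)

theorem strictMonoOn (hG : IsRevenueFunction G G' d pmin pmax) (hpmin : 0 < pmin) :
    StrictMonoOn G (Icc 0 d) := by
  intro x hx y hy hxy
  have := hG.le_add_mul_sub hy hx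
  nlinarith [(hG.deriv_mem y hy).1]

theorem mul_le_of_eq_one_div_mul (hG : IsRevenueFunction G G' d pmin pmax) (hpmin : 0 < pmin)
    {π v : ℝ} (hπ : 1 ≤ π) (hv : v ∈ Icc 0 d) (hw : w ∈ Icc 0 d) (h : G v = 1 / π * G w) :
    π * v ≤ w := by
  have hπ0 : 0 < π := one_pos.trans_le hπ
  have hwπ : w / π ∈ Icc 0 d := ⟨div_nonneg hw.1 hπ0.le, (div_le_self hw.1 hπ).trans hw.2⟩
  have hconc : 1 / π * G w ≤ G (w / π) := by
    have := hG.concaveOn.2 hw hG.zero_mem (show 0 ≤ 1 / π by positivity)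
      (sub_nonneg.2 ((div_le_one hπ0).2 hπ)) (add_sub_cancel _ _)
    simpa [smul_eq_mul, hG.map_zero, div_eq_inv_mul] using this
  have := ((hG.strictMonoOn hpmin).le_iff_le hv hwπ).1 (h ▸ hconc)
  rwa [le_div_iff₀ hπ0, mul_comm] at this

theorem integral_deriv (hG : IsRevenueFunction G G' d pmin pmax) {a b : ℝ} (hab : a ≤ b)
    (ha : 0 ≤ a) (hb : b ≤ d) : ∫ x in a..b, G' x = G b - G a :=
  hG.concaveOn.integral_eq_sub_of_hasDerivWithinAt hG.hasDerivWithinAt hab (Icc_subset_Icc ha hb)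

theorem bddAbove (hG : IsRevenueFunction G G' d pmin pmax) : BddAbove (G '' Icc 0 d) :=
  isCompact_Icc.bddAbove_image hG.continuousOn

theorem antitoneOn_ite (hG : IsRevenueFunction G G' d pmin pmax) (hu : 0 ≤ u) :
    AntitoneOn (fun y => if u ≤ G' y then G' y else 0) (Icc 0 d) := by
  intro y₁ hy₁ y₂ hy₂ hy
  have h := hG.antitoneOn_deriv hy₁ hy₂ hy
  by_cases h₂ : u ≤ G' y₂
  · simp [h₂, h₂.trans h, h]
  · by_cases h₁ : u ≤ G' y₁ <;> simp [h₁, h₂, hu.trans]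

theorem intervalIntegrable_ite (hG : IsRevenueFunction G G' d pmin pmax) (hu : 0 ≤ u)
    {a b : ℝ} (ha : 0 ≤ a) (hab : a ≤ b) (hb : b ≤ d) :
    IntervalIntegrable (fun y => if u ≤ G' y then G' y else 0) volume a b :=
  ((hG.antitoneOn_ite hu).mono
    (by rw [uIcc_of_le hab]; exact Icc_subset_Icc ha hb)).intervalIntegrable

theorem revenueAbove_eq (hG : IsRevenueFunction G G' d pmin pmax) (hw : w ∈ Icc 0 d)
    (hu : u ≤ G' w) : revenueAbove G' w u = G w := by
  have hG' : revenueAbove G' w u = ∫ y in (0 : ℝ)..w, G' y := by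
    refine intervalIntegral.integral_congr fun y hy => ?_
    rw [uIcc_of_le hw.1] at hy
    simp [hu.trans (hG.antitoneOn_deriv ⟨hy.1, hy.2.trans hw.2⟩ hw hy.2)]
  rw [hG', hG.integral_deriv hw.1 le_rfl hw.2, hG.map_zero, sub_zero]

theorem sub_mul_le_revenueAbove_of_le (hG : IsRevenueFunction G G' d pmin pmax) (hwd : w ≤ d)
    (hu : 0 ≤ u) {x : ℝ} (hx : x ∈ Icc 0 w) : G x - u * x ≤ revenueAbove G' w u := by
  have hxd : x ≤ d := hx.2.trans hwd
  have hderiv : IntervalIntegrable G' volume 0 x :=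
    (hG.antitoneOn_deriv.mono
      (by rw [uIcc_of_le hx.1]; exact Icc_subset_Icc le_rfl hxd)).intervalIntegrable
  calc G x - u * x = ∫ y in (0 : ℝ)..x, (G' y - u) := by
        rw [integral_sub hderiv intervalIntegrable_const, hG.integral_deriv hx.1 le_rfl hxd,
          hG.map_zero, intervalIntegral.integral_const, smul_eq_mul]
        ring
    _ ≤ ∫ y in (0 : ℝ)..x, if u ≤ G' y then G' y else 0 := by
        refine integral_mono_on hx.1 (hderiv.sub intervalIntegrable_const)
          (hG.intervalIntegrable_ite hu le_rfl hx.1 hxd) fun y _ => ?_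
        split_ifs with h <;> linarith
    _ ≤ revenueAbove G' w u := by
        refine integral_mono_interval le_rfl hx.1 hx.2 (ae_of_all _ fun y => ?_)
          (hG.intervalIntegrable_ite hu le_rfl (hx.1.trans hx.2) hwd)
        simp only [Pi.zero_apply]
        split_ifs with h <;> linarith

theorem sub_mul_le_revenueAbove (hG : IsRevenueFunction G G' d pmin pmax) (hw : w ∈ Icc 0 d)
    (hu : 0 ≤ u) (hwu : G' w ≤ u) {x : ℝ} (hx : x ∈ Icc 0 d) :
    G x - u * x ≤ revenueAbove G' w u := by
  rcases le_total x w with hxw | hwx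
  · exact hG.sub_mul_le_revenueAbove_of_le hw.2 hu ⟨hx.1, hxw⟩
  · have htan := hG.le_add_mul_sub hw hx
    have := hG.sub_mul_le_revenueAbove_of_le hw.2 hu ⟨hw.1, le_rfl⟩
    nlinarith

theorem antitoneOn_revenueAbove (hG : IsRevenueFunction G G' d pmin pmax) (hw : w ∈ Icc 0 d) :
    AntitoneOn (revenueAbove G' w) (Ici 0) := by
  intro u₁ hu₁ u₂ hu₂ hu
  refine integral_mono_on hw.1 (hG.intervalIntegrable_ite hu₂ le_rfl hw.1 hw.2)
    (hG.intervalIntegrable_ite hu₁ le_rfl hw.1 hw.2) fun y _ => ?_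
  by_cases h₂ : u₂ ≤ G' y
  · simp [h₂, hu.trans h₂]
  · by_cases h₁ : u₁ ≤ G' y <;> simp [h₁, h₂, (show (0:ℝ) ≤ u₁ from hu₁).trans]

theorem integral_revenueAbove_div_sq (hG : IsRevenueFunction G G' d pmin pmax) (hpmin : 0 < pmin)
    (hw : w ∈ Icc 0 d) :
    ∫ u in pmin..pmax, revenueAbove G' w u / u ^ 2 = G w / pmin - w := by
  have hp := hG.pmin_le_pmax
  have hwd : Icc 0 w ⊆ Icc 0 d := Icc_subset_Icc le_rfl hw.2
  -- `φ` extends `G'|[0, w]` to a globally antitone, hence measurable, function.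
  set φ : ℝ → ℝ := fun y => G' (projIcc 0 w hw.1 y)
  have hφ_mem : ∀ y, φ y ∈ Icc pmin pmax := fun y => hG.deriv_mem _ (hwd (projIcc 0 w hw.1 y).2)
  have hφ_eq : ∀ y ∈ uIcc 0 w, φ y = G' y := fun y hy => by
    rw [uIcc_of_le hw.1] at hy
    simp only [φ, projIcc_of_mem hw.1 hy]
  have hφ_meas : Measurable φ := Antitone.measurable fun y₁ y₂ hy =>
    hG.antitoneOn_deriv (hwd (projIcc 0 w hw.1 y₁).2) (hwd (projIcc 0 w hw.1 y₂).2)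
      (monotone_projIcc hw.1 hy)
  set F : ℝ → ℝ → ℝ := fun u y => if u ≤ φ y then φ y / u ^ 2 else 0
  calc ∫ u in pmin..pmax, revenueAbove G' w u / u ^ 2
      = ∫ u in pmin..pmax, ∫ y in (0 : ℝ)..w, F u y := by
        refine intervalIntegral.integral_congr fun u _ => ?_
        rw [revenueAbove, ← intervalIntegral.integral_div]
        refine intervalIntegral.integral_congr fun y hy => ?_
        simp only [F, hφ_eq y hy]
        split_ifs <;> simp
    _ = ∫ y in (0 : ℝ)..w, ∫ u in pmin..pmax, F u y :=
        intervalIntegral_intervalIntegral_swap (integrableOn_ite_div_sq hφ_meas hpmin hp hφ_mem 0 w)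
    _ = ∫ y in (0 : ℝ)..w, (G' y / pmin - 1) := by
        refine intervalIntegral.integral_congr fun y hy => ?_
        rw [← hφ_eq y hy]
        exact integral_ite_le_div_sq hpmin (hφ_mem y)
    _ = G w / pmin - w := by
        have hint : IntervalIntegrable G' volume 0 w :=
          (hG.antitoneOn_deriv.mono (by rwa [uIcc_of_le hw.1])).intervalIntegrable
        rw [intervalIntegral.integral_sub (hint.div_const pmin) intervalIntegrable_const,
          intervalIntegral.integral_div, hG.integral_deriv hw.1 le_rfl hw.2, hG.map_zero]
        simp

end IsRevenueFunction

def feasibleAllocations (δ : ℕ → ℝ) (t : ℕ) (c : ℝ) : Set (ℕ → ℝ) :=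
  {v | (∀ τ ∈ Finset.Icc 1 t, v τ ∈ Icc 0 (δ τ)) ∧ ∑ τ ∈ Finset.Icc 1 t, v τ ≤ c}

noncomputable def optSurplus (g : ℕ → ℝ → ℝ) (δ : ℕ → ℝ) (t : ℕ) (c u : ℝ) : ℝ :=
  sSup ((fun v => ∑ τ ∈ Finset.Icc 1 t, (g τ (v τ) - u * v τ)) '' feasibleAllocations δ t c)

noncomputable def optRevenue (g : ℕ → ℝ → ℝ) (δ : ℕ → ℝ) (t : ℕ) (c : ℝ) : ℝ :=
  optSurplus g δ t c 0

section OptRevenue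

variable {g g' : ℕ → ℝ → ℝ} {δ : ℕ → ℝ} {pmin pmax : ℝ} {t b : ℕ} {c u : ℝ}

theorem sum_nonneg_of_mem_feasibleAllocations {v : ℕ → ℝ} (hv : v ∈ feasibleAllocations δ t c) :
    0 ≤ ∑ τ ∈ Finset.Icc 1 t, v τ :=
  Finset.sum_nonneg fun τ hτ => (hv.1 τ hτ).1

theorem mem_feasibleAllocations_of_succ {v : ℕ → ℝ}
    (hv : v ∈ feasibleAllocations δ (b + 1) c) :
    v ∈ feasibleAllocations δ b (c - v (b + 1)) := by
  refine ⟨fun τ hτ => hv.1 τ (Finset.Icc_subset_Icc_right b.le_succ hτ), ?_⟩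
  have := hv.2
  rw [Finset.sum_Icc_succ_top (Nat.le_add_left 1 b)] at this
  linarith

theorem sum_Icc_update_succ (f : ℕ → ℝ → ℝ) (v : ℕ → ℝ) (x : ℝ) :
    ∑ τ ∈ Finset.Icc 1 b, f τ (Function.update v (b + 1) x τ) = ∑ τ ∈ Finset.Icc 1 b, f τ (v τ) :=
  Finset.sum_congr rfl fun τ hτ => by
    rw [Function.update_of_ne (by rw [Finset.mem_Icc] at hτ; omega)]

theorem update_mem_feasibleAllocations_succ {v : ℕ → ℝ} {x : ℝ}
    (hv : v ∈ feasibleAllocations δ b (c - x)) (hx : x ∈ Icc 0 (δ (b + 1))) :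
    Function.update v (b + 1) x ∈ feasibleAllocations δ (b + 1) c := by
  refine ⟨fun τ hτ => ?_, ?_⟩
  · rcases eq_or_ne τ (b + 1) with rfl | hτb
    · rwa [Function.update_self]
    · rw [Function.update_of_ne hτb]
      exact hv.1 τ (by rw [Finset.mem_Icc] at hτ ⊢; omega)
  · rw [Finset.sum_Icc_succ_top (Nat.le_add_left 1 b), sum_Icc_update_succ (fun _ y => y),
      Function.update_self]
    linarith [hv.2]

variable (hg : ∀ τ ∈ Finset.Icc 1 t, IsRevenueFunction (g τ) (g' τ) (δ τ) pmin pmax)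
include hg

theorem zero_mem_feasibleAllocations (hc : 0 ≤ c) : (fun _ => 0) ∈ feasibleAllocations δ t c :=
  ⟨fun τ hτ => (hg τ hτ).zero_mem, by simpa using hc⟩

theorem bddAbove_surplus_image (hu : 0 ≤ u) :
    BddAbove ((fun v => ∑ τ ∈ Finset.Icc 1 t, (g τ (v τ) - u * v τ)) ''
      feasibleAllocations δ t c) := by
  refine ⟨∑ τ ∈ Finset.Icc 1 t, sSup (g τ '' Icc 0 (δ τ)), ?_⟩
  rintro _ ⟨v, hv, rfl⟩
  refine Finset.sum_le_sum fun τ hτ => ?_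
  have := le_csSup (hg τ hτ).bddAbove (mem_image_of_mem _ (hv.1 τ hτ))
  nlinarith [(hv.1 τ hτ).1]

theorem le_optSurplus (hu : 0 ≤ u) {v : ℕ → ℝ} (hv : v ∈ feasibleAllocations δ t c) :
    ∑ τ ∈ Finset.Icc 1 t, (g τ (v τ) - u * v τ) ≤ optSurplus g δ t c u :=
  le_csSup (bddAbove_surplus_image hg hu) (mem_image_of_mem _ hv)

theorem optSurplus_le (hc : 0 ≤ c) {a : ℝ}
    (h : ∀ v ∈ feasibleAllocations δ t c, ∑ τ ∈ Finset.Icc 1 t, (g τ (v τ) - u * v τ) ≤ a) :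
    optSurplus g δ t c u ≤ a :=
  csSup_le (image_nonempty.2 ⟨_, zero_mem_feasibleAllocations hg hc⟩) (forall_mem_image.2 h)

theorem le_optRevenue {v : ℕ → ℝ} (hv : v ∈ feasibleAllocations δ t c) :
    ∑ τ ∈ Finset.Icc 1 t, g τ (v τ) ≤ optRevenue g δ t c := by
  simpa [optRevenue] using le_optSurplus hg le_rfl hv

theorem optRevenue_le (hc : 0 ≤ c) {a : ℝ}
    (h : ∀ v ∈ feasibleAllocations δ t c, ∑ τ ∈ Finset.Icc 1 t, g τ (v τ) ≤ a) :
    optRevenue g δ t c ≤ a :=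
  optSurplus_le hg hc fun v hv => by simpa using h v hv

theorem exists_lt_optRevenue (hc : 0 ≤ c) {ε : ℝ} (hε : 0 < ε) :
    ∃ v ∈ feasibleAllocations δ t c, optRevenue g δ t c - ε < ∑ τ ∈ Finset.Icc 1 t, g τ (v τ) := by
  have hlt : optRevenue g δ t c - ε < optSurplus g δ t c 0 := sub_lt_self _ hε
  obtain ⟨_, ⟨v, hv, rfl⟩, hlt⟩ :=
    exists_lt_of_lt_csSup (image_nonempty.2 ⟨_, zero_mem_feasibleAllocations hg hc⟩) hlt
  exact ⟨v, hv, by simpa using hlt⟩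

theorem optRevenue_concaveOn : ConcaveOn ℝ (Ici 0) (optRevenue g δ t) := by
  refine ⟨convex_Ici 0, fun c₁ hc₁ c₂ hc₂ a b ha hb hab => ?_⟩
  simp only [smul_eq_mul]
  refine le_of_forall_pos_le_add fun ε hε => ?_
  obtain ⟨v₁, hv₁, hlt₁⟩ := exists_lt_optRevenue hg hc₁ hε
  obtain ⟨v₂, hv₂, hlt₂⟩ := exists_lt_optRevenue hg hc₂ hε
  have hmix : (fun τ => a * v₁ τ + b * v₂ τ) ∈ feasibleAllocations δ t (a * c₁ + b * c₂) := by
    refine ⟨fun τ hτ => ?_, ?_⟩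
    · have h₁ := hv₁.1 τ hτ
      have h₂ := hv₂.1 τ hτ
      constructor <;> dsimp only
      · nlinarith [h₁.1, h₂.1]
      · linarith [mul_le_mul_of_nonneg_left h₁.2 ha, mul_le_mul_of_nonneg_left h₂.2 hb,
          show a * δ τ + b * δ τ = δ τ by rw [← add_mul, hab, one_mul]]
    · rw [Finset.sum_add_distrib, ← Finset.mul_sum, ← Finset.mul_sum]
      nlinarith [hv₁.2, hv₂.2]
  have hconc : a * ∑ τ ∈ Finset.Icc 1 t, g τ (v₁ τ) + b * ∑ τ ∈ Finset.Icc 1 t, g τ (v₂ τ) ≤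
      ∑ τ ∈ Finset.Icc 1 t, g τ (a * v₁ τ + b * v₂ τ) := by
    rw [Finset.mul_sum, Finset.mul_sum, ← Finset.sum_add_distrib]
    exact Finset.sum_le_sum fun τ hτ => (hg τ hτ).concaveOn.2 (hv₁.1 τ hτ) (hv₂.1 τ hτ) ha hb hab
  have := le_optRevenue hg hmix
  nlinarith

theorem antitoneOn_optSurplus (hc : 0 ≤ c) : AntitoneOn (optSurplus g δ t c) (Ici 0) := by
  intro u₁ hu₁ u₂ hu₂ hu
  refine optSurplus_le hg hc fun v hv => (Finset.sum_le_sum fun τ hτ => ?_).trans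
    (le_optSurplus hg hu₁ hv)
  nlinarith [(hv.1 τ hτ).1]

theorem optRevenue_sub_mul_le_optSurplus {C : ℝ} (hu : 0 ≤ u) (hc : c ∈ Icc 0 C) :
    optRevenue g δ t c - u * c ≤ optSurplus g δ t C u := by
  suffices optRevenue g δ t c ≤ optSurplus g δ t C u + u * c by linarith
  refine optRevenue_le hg hc.1 fun v hv => ?_
  have := le_optSurplus hg hu (c := C) ⟨hv.1, hv.2.trans hc.2⟩
  rw [Finset.sum_sub_distrib, ← Finset.mul_sum] at this
  nlinarith [hv.2]

theorem optRevenue_le_mul (hpmax : 0 ≤ pmax) (hc : 0 ≤ c) : optRevenue g δ t c ≤ pmax * c := by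
  refine optRevenue_le hg hc fun v hv => ?_
  calc ∑ τ ∈ Finset.Icc 1 t, g τ (v τ) ≤ ∑ τ ∈ Finset.Icc 1 t, pmax * v τ :=
        Finset.sum_le_sum fun τ hτ => (hg τ hτ).le_mul (hv.1 τ hτ)
    _ ≤ pmax * c := by rw [← Finset.mul_sum]; exact mul_le_mul_of_nonneg_left hv.2 hpmax

end OptRevenue

theorem mem_Icc_one_succ (b : ℕ) : b + 1 ∈ Finset.Icc 1 (b + 1) :=
  Finset.right_mem_Icc.2 (Nat.le_add_left 1 b)

section Succ

variable {g g' : ℕ → ℝ → ℝ} {δ : ℕ → ℝ} {pmin pmax : ℝ} {b : ℕ} {c u C : ℝ}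
variable (hg : ∀ τ ∈ Finset.Icc 1 (b + 1), IsRevenueFunction (g τ) (g' τ) (δ τ) pmin pmax)
include hg

theorem isRevenueFunction_of_succ :
    ∀ τ ∈ Finset.Icc 1 b, IsRevenueFunction (g τ) (g' τ) (δ τ) pmin pmax :=
  fun τ hτ => hg τ (Finset.Icc_subset_Icc_right b.le_succ hτ)

theorem optRevenue_add_le_optRevenue_succ {x : ℝ} (hx : x ∈ Icc 0 (δ (b + 1))) (hxc : x ≤ c) :
    optRevenue g δ b (c - x) + g (b + 1) x ≤ optRevenue g δ (b + 1) c := by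
  suffices optRevenue g δ b (c - x) ≤ optRevenue g δ (b + 1) c - g (b + 1) x by linarith
  refine optRevenue_le (isRevenueFunction_of_succ hg) (sub_nonneg.2 hxc) fun v hv => ?_
  have := le_optRevenue hg (update_mem_feasibleAllocations_succ hv hx)
  rw [Finset.sum_Icc_succ_top (Nat.le_add_left 1 b), sum_Icc_update_succ,
    Function.update_self] at this
  linarith

theorem optRevenue_le_optRevenue_succ (hc : 0 ≤ c) :
    optRevenue g δ b c ≤ optRevenue g δ (b + 1) c := by
  have hG := hg (b + 1) (mem_Icc_one_succ b)
  simpa [hG.map_zero] using optRevenue_add_le_optRevenue_succ hg hG.zero_mem hc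

theorem optRevenue_succ_le (hpmin : 0 < pmin) (hc : 0 ≤ c) :
    optRevenue g δ (b + 1) c ≤ optRevenue g δ b c + g (b + 1) (δ (b + 1)) := by
  have hG := hg (b + 1) (mem_Icc_one_succ b)
  refine optRevenue_le hg hc fun v hv => ?_
  have hx := hv.1 (b + 1) (mem_Icc_one_succ b)
  have hres := mem_feasibleAllocations_of_succ hv
  have h₁ := le_optRevenue (isRevenueFunction_of_succ hg) (c := c)
    ⟨hres.1, hres.2.trans (by linarith [hx.1])⟩
  have h₂ := (hG.strictMonoOn hpmin).monotoneOn hx ⟨hG.nonneg, le_rfl⟩ hx.2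
  rw [Finset.sum_Icc_succ_top (Nat.le_add_left 1 b)]
  linarith

theorem exists_eq_optRevenue_succ_sub (hpmin : 0 < pmin) (hC : 0 ≤ C) :
    ∃ w ∈ Icc 0 (δ (b + 1)), g (b + 1) w = optRevenue g δ (b + 1) C - optRevenue g δ b C := by
  have hG := hg (b + 1) (mem_Icc_one_succ b)
  refine intermediate_value_Icc hG.nonneg hG.continuousOn ⟨?_, ?_⟩
  · linarith [hG.map_zero, optRevenue_le_optRevenue_succ hg hC]
  · linarith [optRevenue_succ_le hg hpmin hC]

theorem monotoneOn_optRevenue_succ_sub :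
    MonotoneOn (fun c => optRevenue g δ (b + 1) c - optRevenue g δ b c) (Ici 0) := by
  intro c hc c' _ hcc'
  have hg_b := isRevenueFunction_of_succ hg
  suffices optRevenue g δ (b + 1) c ≤
      optRevenue g δ b c + (optRevenue g δ (b + 1) c' - optRevenue g δ b c') by
    dsimp only; linarith
  refine optRevenue_le hg hc fun v hv => ?_
  have hx := hv.1 (b + 1) (mem_Icc_one_succ b)
  have hres := mem_feasibleAllocations_of_succ hv
  have hcx : 0 ≤ c - v (b + 1) := (sum_nonneg_of_mem_feasibleAllocations hres).trans hres.2
  have h₁ := le_optRevenue hg_b hres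
  -- the increments of the concave function `optRevenue g δ b` decrease
  have h₂ := (optRevenue_concaveOn hg_b).map_add_map_le_of_mem_Icc hcx (hc.trans hcc')
    ⟨sub_le_self _ hx.1, hcc'⟩
  have h₃ := optRevenue_add_le_optRevenue_succ hg hx (c := c') (by linarith)
  rw [show c - v (b + 1) + c' - c = c' - v (b + 1) by ring] at h₂
  rw [Finset.sum_Icc_succ_top (Nat.le_add_left 1 b)]
  linarith

theorem optSurplus_succ_sub_le (hu : 0 ≤ u) (hC : 0 ≤ C) :
    optSurplus g δ (b + 1) C u - optSurplus g δ b C u ≤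
      optRevenue g δ (b + 1) C - optRevenue g δ b C := by
  suffices optSurplus g δ (b + 1) C u ≤
      optSurplus g δ b C u + (optRevenue g δ (b + 1) C - optRevenue g δ b C) by linarith
  refine optSurplus_le hg hC fun v hv => ?_
  have hc : ∑ τ ∈ Finset.Icc 1 (b + 1), v τ ∈ Icc 0 C :=
    ⟨sum_nonneg_of_mem_feasibleAllocations hv, hv.2⟩
  have h₁ := le_optRevenue hg ⟨hv.1, le_rfl⟩
  have h₂ := optRevenue_sub_mul_le_optSurplus (isRevenueFunction_of_succ hg) hu hc
  have h₃ := monotoneOn_optRevenue_succ_sub hg hc.1 hC hc.2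
  rw [Finset.sum_sub_distrib, ← Finset.mul_sum]
  dsimp only at h₃
  linarith

theorem optSurplus_succ_sub_le_revenueAbove (hu : 0 ≤ u) (hC : 0 ≤ C) {w : ℝ}
    (hw : w ∈ Icc 0 (δ (b + 1)))
    (hgw : g (b + 1) w = optRevenue g δ (b + 1) C - optRevenue g δ b C) :
    optSurplus g δ (b + 1) C u - optSurplus g δ b C u ≤ revenueAbove (g' (b + 1)) w u := by
  have hG := hg (b + 1) (mem_Icc_one_succ b)
  by_cases hwu : u ≤ g' (b + 1) w
  · rw [hG.revenueAbove_eq hw hwu, hgw]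
    exact optSurplus_succ_sub_le hg hu hC
  suffices optSurplus g δ (b + 1) C u ≤ optSurplus g δ b C u + revenueAbove (g' (b + 1)) w u by
    linarith
  refine optSurplus_le hg hC fun v hv => ?_
  have hx := hv.1 (b + 1) (mem_Icc_one_succ b)
  have hres := mem_feasibleAllocations_of_succ hv
  have h₁ := le_optSurplus (isRevenueFunction_of_succ hg) hu (c := C)
    ⟨hres.1, hres.2.trans (by linarith [hx.1])⟩
  have h₂ := hG.sub_mul_le_revenueAbove hw hu (not_le.1 hwu).le hx
  rw [Finset.sum_Icc_succ_top (Nat.le_add_left 1 b)]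
  linarith

end Succ

/-- If the marginal value `q = ∂_c optRevenue g δ t` of capacity stays in `[pmin, pmax]`, this is
`∫_0^C (1 + log (q c / pmin)) dc`; writing it through `optSurplus` avoids differentiating
`optRevenue` in the capacity. -/
noncomputable def allocationPotential (g : ℕ → ℝ → ℝ) (δ : ℕ → ℝ) (C pmin pmax : ℝ) (t : ℕ) : ℝ :=
  optRevenue g δ t C / pmin - ∫ u in pmin..pmax, optSurplus g δ t C u / u ^ 2

section Potential

variable {g g' : ℕ → ℝ → ℝ} {δ : ℕ → ℝ} {pmin pmax C : ℝ}

theorem optSurplus_zero {c u : ℝ} (hc : 0 ≤ c) : optSurplus g δ 0 c u = 0 := by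
  simp [optSurplus, feasibleAllocations, hc]

theorem allocationPotential_zero (hC : 0 ≤ C) : allocationPotential g δ C pmin pmax 0 = 0 := by
  simp [allocationPotential, optRevenue, optSurplus_zero hC]

theorem intervalIntegrable_optSurplus_div_sq {t : ℕ}
    (hg : ∀ τ ∈ Finset.Icc 1 t, IsRevenueFunction (g τ) (g' τ) (δ τ) pmin pmax)
    (hpmin : 0 < pmin) (hp : pmin ≤ pmax) (hC : 0 ≤ C) :
    IntervalIntegrable (fun u => optSurplus g δ t C u / u ^ 2) volume pmin pmax :=
  AntitoneOn.intervalIntegrable_div_sq hpmin hp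
    ((antitoneOn_optSurplus hg hC).mono fun _ hu => hpmin.le.trans hu.1)

theorem allocationPotential_le {t : ℕ}
    (hg : ∀ τ ∈ Finset.Icc 1 t, IsRevenueFunction (g τ) (g' τ) (δ τ) pmin pmax)
    (hpmin : 0 < pmin) (hp : pmin ≤ pmax) (hC : 0 ≤ C) :
    allocationPotential g δ C pmin pmax t ≤ (Real.log (pmax / pmin) + 1) * C := by
  set R := optRevenue g δ t C
  have hpmax : 0 < pmax := hpmin.trans_le hp
  have hdual : ∫ u in pmin..pmax, (R - u * C) / u ^ 2 ≤
      ∫ u in pmin..pmax, optSurplus g δ t C u / u ^ 2 := by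
    refine integral_mono_on hp (AntitoneOn.intervalIntegrable_div_sq hpmin hp
      fun u _ v _ huv => by nlinarith) (intervalIntegrable_optSurplus_div_sq hg hpmin hp hC)
      fun u hu => div_le_div_of_nonneg_right ?_ (sq_nonneg u)
    exact optRevenue_sub_mul_le_optSurplus hg (hpmin.le.trans hu.1) ⟨hC, le_rfl⟩
  rw [integral_sub_mul_div_sq hpmin hp] at hdual
  have hR : R / pmax ≤ C := by
    rw [div_le_iff₀ hpmax, mul_comm]
    exact optRevenue_le_mul hg hpmax.le hC
  rw [allocationPotential]
  nlinarith

theorem le_allocationPotential_succ_sub {b : ℕ}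
    (hg : ∀ τ ∈ Finset.Icc 1 (b + 1), IsRevenueFunction (g τ) (g' τ) (δ τ) pmin pmax)
    (hpmin : 0 < pmin) (hC : 0 ≤ C) {w : ℝ} (hw : w ∈ Icc 0 (δ (b + 1)))
    (hgw : g (b + 1) w = optRevenue g δ (b + 1) C - optRevenue g δ b C) :
    w ≤ allocationPotential g δ C pmin pmax (b + 1) - allocationPotential g δ C pmin pmax b := by
  have hG := hg (b + 1) (mem_Icc_one_succ b)
  have hp := hG.pmin_le_pmax
  have hint_succ := intervalIntegrable_optSurplus_div_sq hg hpmin hp hC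
  have hint := intervalIntegrable_optSurplus_div_sq (isRevenueFunction_of_succ hg) hpmin hp hC
  have hsub : ∫ u in pmin..pmax, (optSurplus g δ (b + 1) C u / u ^ 2 - optSurplus g δ b C u / u ^ 2)
      ≤ g (b + 1) w / pmin - w := by
    rw [← hG.integral_revenueAbove_div_sq hpmin hw]
    refine integral_mono_on hp (hint_succ.sub hint) (AntitoneOn.intervalIntegrable_div_sq hpmin hp
      ((hG.antitoneOn_revenueAbove hw).mono fun _ hu => hpmin.le.trans hu.1)) fun u hu => ?_
    rw [← sub_div]
    exact div_le_div_of_nonneg_right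
      (optSurplus_succ_sub_le_revenueAbove hg (hpmin.le.trans hu.1) hC hw hgw) (sq_nonneg u)
  rw [intervalIntegral.integral_sub hint_succ hint, hgw] at hsub
  rw [allocationPotential, allocationPotential]
  have : (optRevenue g δ (b + 1) C - optRevenue g δ b C) / pmin =
      optRevenue g δ (b + 1) C / pmin - optRevenue g δ b C / pmin := sub_div _ _ _
  linarith

theorem mul_le_allocationPotential_succ_sub {b : ℕ}
    (hg : ∀ τ ∈ Finset.Icc 1 (b + 1), IsRevenueFunction (g τ) (g' τ) (δ τ) pmin pmax)
    (hpmin : 0 < pmin) (hC : 0 ≤ C) {π v : ℝ} (hπ : 1 ≤ π) (hv : v ∈ Icc 0 (δ (b + 1)))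
    (hpursuit : g (b + 1) v = 1 / π * (optRevenue g δ (b + 1) C - optRevenue g δ b C)) :
    π * v ≤
      allocationPotential g δ C pmin pmax (b + 1) - allocationPotential g δ C pmin pmax b := by
  obtain ⟨w, hw, hgw⟩ := exists_eq_optRevenue_succ_sub hg hpmin hC
  calc π * v ≤ w := (hg _ (mem_Icc_one_succ b)).mul_le_of_eq_one_div_mul hpmin hπ hv hw
        (by rw [hpursuit, hgw])
    _ ≤ _ := le_allocationPotential_succ_sub hg hpmin hC hw hgw

end Potential

theorem optRevenue_eq_of_isGreatest {g : ℕ → ℝ → ℝ} {δ : ℕ → ℝ} {t : ℕ} {c y : ℝ}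
    (h : IsGreatest {y : ℝ | ∃ v : ℕ → ℝ,
      (∀ τ ∈ Finset.Icc 1 t, v τ ∈ Icc 0 (δ τ)) ∧
      (∑ τ ∈ Finset.Icc 1 t, v τ) ≤ c ∧
      y = ∑ τ ∈ Finset.Icc 1 t, g τ (v τ)} y) :
    optRevenue g δ t c = y := by
  rw [← h.csSup_eq, optRevenue, optSurplus]
  congr 1
  ext y
  simp [feasibleAllocations, and_assoc, eq_comm]

theorem stmt_6_general (T : ℕ) (C pmin pmax θ π : ℝ)
    (g : ℕ → ℝ → ℝ) (g' : ℕ → ℝ → ℝ) (δ : ℕ → ℝ)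
    (OPT : ℕ → ℝ) (vhat : ℕ → ℝ)
    (hθ : 1 ≤ θ) (hC : 0 < C) (hpmin : 0 < pmin) (hpmax : pmax = θ * pmin)
    (hπ : 1 ≤ π)
    (hconc : ∀ t ∈ Finset.Icc 1 T, ConcaveOn ℝ (Set.Icc 0 (δ t)) (g t))
    (hg0 : ∀ t ∈ Finset.Icc 1 T, g t 0 = 0)
    (hderiv : ∀ t ∈ Finset.Icc 1 T, ∀ v ∈ Set.Icc 0 (δ t),
      HasDerivWithinAt (g t) (g' t v) (Set.Icc 0 (δ t)) v)
    (hgrad : ∀ t ∈ Finset.Icc 1 T, ∀ v ∈ Set.Icc 0 (δ t), g' t v ∈ Set.Icc pmin pmax)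
    (hOPT0 : OPT 0 = 0)
    (hOPT : ∀ t ∈ Finset.Icc 1 T,
      IsGreatest {y : ℝ | ∃ v : ℕ → ℝ,
        (∀ τ ∈ Finset.Icc 1 t, v τ ∈ Set.Icc 0 (δ τ)) ∧
        (∑ τ ∈ Finset.Icc 1 t, v τ) ≤ C ∧
        y = ∑ τ ∈ Finset.Icc 1 t, g τ (v τ)} (OPT t))
    (hpursuit : ∀ t ∈ Finset.Icc 1 T,
      g t (vhat t) = (1 / π) * (OPT t - OPT (t - 1)))
    (hvhat : ∀ t ∈ Finset.Icc 1 T, vhat t ∈ Set.Icc 0 (δ t)) :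
    (∑ t ∈ Finset.Icc 1 T, vhat t) ≤ ((Real.log θ + 1) / π) * C := by
  have hg : ∀ t ∈ Finset.Icc 1 T, IsRevenueFunction (g t) (g' t) (δ t) pmin pmax := fun t ht =>
    ⟨(hvhat t ht).1.trans (hvhat t ht).2, hconc t ht, hg0 t ht, hderiv t ht, hgrad t ht⟩
  have hOPT_eq : ∀ t ≤ T, OPT t = optRevenue g δ t C := by
    intro t ht
    rcases t.eq_zero_or_pos with rfl | ht0
    · rw [hOPT0, optRevenue, optSurplus_zero hC.le]
    · exact (optRevenue_eq_of_isGreatest (hOPT t (Finset.mem_Icc.2 ⟨ht0, ht⟩))).symm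
  have hstep : ∀ b < T, π * vhat (b + 1) ≤ allocationPotential g δ C pmin pmax (b + 1) -
      allocationPotential g δ C pmin pmax b := by
    intro b hb
    have hmem : b + 1 ∈ Finset.Icc 1 T := Finset.mem_Icc.2 ⟨Nat.le_add_left 1 b, hb⟩
    refine mul_le_allocationPotential_succ_sub
      (fun τ hτ => hg τ (Finset.Icc_subset_Icc_right (Nat.succ_le_of_lt hb) hτ)) hpmin hC.le hπ
      (hvhat _ hmem) ?_
    rw [hpursuit _ hmem, Nat.add_sub_cancel, hOPT_eq _ hb, hOPT_eq b hb.le]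
  have hsum := sum_Icc_le_sub_of_forall_le_sub (x := fun t => π * vhat t) hstep
  rw [allocationPotential_zero hC.le, sub_zero, ← Finset.mul_sum] at hsum
  have hbound := allocationPotential_le hg hpmin (hpmax ▸ le_mul_of_one_le_left hpmin.le hθ) hC.le
  rw [hpmax, mul_div_cancel_right₀ θ hpmin.ne', ← hpmax] at hbound
  rw [div_mul_eq_mul_div, le_div_iff₀ (one_pos.trans_le hπ)]
  linarith

theorem stmt_6 (T : ℕ) (C pmin pmax θ π : ℝ)
    (g : ℕ → ℝ → ℝ) (g' : ℕ → ℝ → ℝ) (δ : ℕ → ℝ)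
    (OPT : ℕ → ℝ) (vhat : ℕ → ℝ)
    (hθ : 1 ≤ θ) (hC : 0 < C) (hpmin : 0 < pmin) (hpmax : pmax = θ * pmin)
    (hπ : 1 ≤ π)
    (hδ : ∀ t ∈ Finset.Icc 1 T, 0 ≤ δ t)
    (hconc : ∀ t ∈ Finset.Icc 1 T, ConcaveOn ℝ (Set.Icc 0 (δ t)) (g t))
    (hmono : ∀ t ∈ Finset.Icc 1 T, StrictMonoOn (g t) (Set.Icc 0 (δ t)))
    (hg0 : ∀ t ∈ Finset.Icc 1 T, g t 0 = 0)
    (hderiv : ∀ t ∈ Finset.Icc 1 T, ∀ v ∈ Set.Icc 0 (δ t),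
      HasDerivWithinAt (g t) (g' t v) (Set.Icc 0 (δ t)) v)
    (hgrad : ∀ t ∈ Finset.Icc 1 T, ∀ v ∈ Set.Icc 0 (δ t), g' t v ∈ Set.Icc pmin pmax)
    (hOPT0 : OPT 0 = 0)
    (hOPT : ∀ t ∈ Finset.Icc 1 T,
      IsGreatest {y : ℝ | ∃ v : ℕ → ℝ,
        (∀ τ ∈ Finset.Icc 1 t, v τ ∈ Set.Icc 0 (δ τ)) ∧
        (∑ τ ∈ Finset.Icc 1 t, v τ) ≤ C ∧
        y = ∑ τ ∈ Finset.Icc 1 t, g τ (v τ)} (OPT t))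
    (hpursuit : ∀ t ∈ Finset.Icc 1 T,
      g t (vhat t) = (1 / π) * (OPT t - OPT (t - 1)))
    (hvhat : ∀ t ∈ Finset.Icc 1 T, vhat t ∈ Set.Icc 0 (δ t)) :
    (∑ t ∈ Finset.Icc 1 T, vhat t) ≤ ((Real.log θ + 1) / π) * C :=
  stmt_6_general T C pmin pmax θ π g g' δ OPT vhat hθ hC hpmin hpmax hπ hconc hg0 hderiv hgrad hOPT0
    hOPT hpursuit hvhat
end

section
/- Fix t, C > 0, π ≥ 1, and G(x, a) as the parametric optimum defined from concave increasing revenue functions g̃_τ with linear packing constraints (total capacity x, current-slot rate a, fixed past rates). Let f(x) = (1/(πC))·e^(x/(πC))/(e^(1/π)−1) and Ψ(a) = f(C)·G(C, a) − (1/(πC))·∫₀^C G(x, a)·f(x) dx. Then Ψ(a) = ∫₀^C f(x)·∂G(x,a)/∂x dx wherever the partial derivative exists, and Ψ is nondecreasing in a. -/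
open Set MeasureTheory

/-!
Since `f' = f / (π C)`, integrating `(f G)' = f G / (π C) + f ∂G/∂x` over `[0, C]` and using
`G(0, a) = 0` gives the integral formula for `Ψ`.

For monotonicity, `G` is supermodular: given optimal allocations `u` for `(x₁, a₂)` and `w` for
`(x₂, a₁)` with `x₁ ≤ x₂`, `a₁ ≤ a₂`, one splits `u + w = p + q` coordinatewise between `u` and `w`
with `p` feasible for `(x₁, a₁)` and `q` for `(x₂, a₂)`, and concavity of the `g̃_τ` gives
`g̃(u) + g̃(w) ≤ g̃(p) + g̃(q)`. Hence `D(x) = G(x, a₂) - G(x, a₁)` is maximal at `x = C`, and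
since `f` is a probability density on `[0, C]` with `f(C) ≥ 1 / (π C)`,
`Ψ(a₂) - Ψ(a₁) = f(C) D(C) - ∫ D f / (π C) ≥ (f(C) - 1 / (π C)) D(C) ≥ 0`.
-/

theorem ConcaveOn.add_le_add_sub_of_mem_segment {E : Type*} [AddCommGroup E] [Module ℝ E]
    {s : Set E} {g : E → ℝ} (hg : ConcaveOn ℝ s g) {u w p : E} (hu : u ∈ s) (hw : w ∈ s)
    (hp : p ∈ segment ℝ u w) : g u + g w ≤ g p + g (u + w - p) := by
  obtain ⟨α, β, hα, hβ, hαβ, rfl⟩ := hp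
  obtain rfl : β = 1 - α := by linarith
  have hq : u + w - (α • u + (1 - α) • w) = (1 - α) • u + α • w := by module
  rw [hq]
  have h₁ := hg.2 hu hw hα hβ hαβ
  have h₂ := hg.2 hu hw hβ hα (by rwa [add_comm])
  simp only [smul_eq_mul] at h₁ h₂
  linarith

theorem exists_forall_mem_Icc_sum_eq {ι : Type*} (s : Finset ι) {l r : ι → ℝ}
    (hlr : ∀ i, l i ≤ r i) {T : ℝ} (hl : ∑ i ∈ s, l i ≤ T) (hr : T ≤ ∑ i ∈ s, r i) :
    ∃ p : ι → ℝ, (∀ i, p i ∈ Icc (l i) (r i)) ∧ ∑ i ∈ s, p i = T := by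
  have hcont : ContinuousOn (fun θ : ℝ => ∑ i ∈ s, (l i + θ * (r i - l i))) (Icc 0 1) := by
    fun_prop
  obtain ⟨θ, ⟨hθ0, hθ1⟩, hsum⟩ :=
    intermediate_value_Icc zero_le_one hcont (by simpa using And.intro hl hr)
  exact ⟨fun i => l i + θ * (r i - l i), fun i => by constructor <;> nlinarith [hlr i], hsum⟩

theorem intervalIntegrable_deriv_of_monotoneOn {a b : ℝ} (hab : a ≤ b) {g g' : ℝ → ℝ}
    (hmono : MonotoneOn g (Icc a b)) (hg : ∀ x ∈ Icc a b, HasDerivWithinAt g (g' x) (Icc a b) x) :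
    IntervalIntegrable g' volume a b := by
  have hderiv : ∀ x ∈ Ioo a b, HasDerivAt g (g' x) x := fun x hx =>
    (hg x (Ioo_subset_Icc_self hx)).hasDerivAt (Icc_mem_nhds hx.1 hx.2)
  refine intervalIntegral.intervalIntegrable_deriv_of_nonneg (g := g) ?_ ?_ ?_
  · rw [uIcc_of_le hab]; exact fun x hx => (hg x hx).continuousWithinAt
  · simpa [hab] using hderiv
  · simp only [hab, min_eq_left, max_eq_right]
    exact fun x hx => (hderiv x hx).hasDerivWithinAt.nonneg_of_monotoneOn
      (isOpen_Ioo.preperfect x hx) (hmono.mono Ioo_subset_Icc_self)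

/-- The probability density on `[0, C]` proportional to `exp (x / c)`; the weight `f` of the
theorem is `expDensity (π * C) C`. -/
noncomputable def expDensity (c C x : ℝ) : ℝ := Real.exp (x / c) / (c * (Real.exp (C / c) - 1))

section ExpDensity

variable {c C : ℝ}

theorem hasDerivAt_expDensity (c C x : ℝ) :
    HasDerivAt (expDensity c C) (expDensity c C x / c) x := by
  refine (((hasDerivAt_id' x).div_const c).exp.div_const _).congr_deriv ?_
  unfold expDensity
  ring

theorem continuous_expDensity (c C : ℝ) : Continuous (expDensity c C) :=
  continuous_iff_continuousAt.2 fun x => (hasDerivAt_expDensity c C x).continuousAt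

theorem integral_expDensity (hc : c ≠ 0) (hC : C ≠ 0) :
    ∫ x in (0 : ℝ)..C, expDensity c C x = 1 := by
  have hderiv : ∀ x ∈ uIcc 0 C, HasDerivAt (fun y => c * expDensity c C y) (expDensity c C x) x :=
    fun x _ => by simpa [mul_div_cancel₀ _ hc] using (hasDerivAt_expDensity c C x).const_mul c
  have hE : Real.exp (C / c) - 1 ≠ 0 := by
    rw [sub_ne_zero, Ne, Real.exp_eq_one_iff]; exact div_ne_zero hC hc
  rw [intervalIntegral.integral_eq_sub_of_hasDerivAt hderiv
    ((continuous_expDensity c C).intervalIntegrable 0 C)]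
  simp only [expDensity, zero_div, Real.exp_zero]
  field_simp

theorem expDensity_pos (hc : 0 < c) (hC : 0 < C) (x : ℝ) : 0 < expDensity c C x := by
  have : 0 < Real.exp (C / c) - 1 := by
    rw [sub_pos, Real.one_lt_exp_iff]; positivity
  unfold expDensity; positivity

theorem inv_le_expDensity_self (hc : 0 < c) (hC : 0 < C) : c⁻¹ ≤ expDensity c C C := by
  have hE : 0 < Real.exp (C / c) - 1 := by
    rw [sub_pos, Real.one_lt_exp_iff]; positivity
  rw [expDensity, le_div_iff₀ (by positivity), inv_mul_cancel_left₀ hc.ne']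
  linarith

end ExpDensity

/-- The pseudo-cost `Ψ` of the revenue curve `g = G(·, a)`. -/
noncomputable def pseudoCost (c C : ℝ) (g : ℝ → ℝ) : ℝ :=
  expDensity c C C * g C - c⁻¹ * ∫ x in (0 : ℝ)..C, g x * expDensity c C x

section PseudoCost

variable {c C : ℝ}

theorem pseudoCost_eq_integral_mul_deriv (hC : 0 ≤ C) {g g' : ℝ → ℝ}
    (hg : ∀ x ∈ Icc 0 C, HasDerivWithinAt g (g' x) (Icc 0 C) x)
    (hg' : IntervalIntegrable g' volume 0 C) (hg0 : g 0 = 0) :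
    pseudoCost c C g = ∫ x in (0 : ℝ)..C, expDensity c C x * g' x := by
  rw [← uIcc_of_le hC] at hg
  rw [intervalIntegral.integral_mul_deriv_eq_deriv_mul_of_hasDerivWithinAt
    (fun x _ => (hasDerivAt_expDensity c C x).hasDerivWithinAt) hg
    ((continuous_expDensity c C).div_const c |>.intervalIntegrable 0 C) hg',
    pseudoCost, hg0, mul_zero, sub_zero, ← intervalIntegral.integral_const_mul]
  congr 1
  exact intervalIntegral.integral_congr fun x _ => by ring

theorem pseudoCost_mono (hc : 0 < c) (hC : 0 < C) {g₁ g₂ : ℝ → ℝ}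
    (hg₁ : IntervalIntegrable g₁ volume 0 C) (hg₂ : IntervalIntegrable g₂ volume 0 C)
    (hgap : ∀ x ∈ Icc 0 C, g₂ x - g₁ x ≤ g₂ C - g₁ C) (hgC : g₁ C ≤ g₂ C) :
    pseudoCost c C g₁ ≤ pseudoCost c C g₂ := by
  have hρ := continuous_expDensity c C
  have hint : ∫ x in (0 : ℝ)..C, (g₂ x - g₁ x) * expDensity c C x ≤ g₂ C - g₁ C :=
    calc ∫ x in (0 : ℝ)..C, (g₂ x - g₁ x) * expDensity c C x
        ≤ ∫ x in (0 : ℝ)..C, (g₂ C - g₁ C) * expDensity c C x :=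
          intervalIntegral.integral_mono_on hC.le ((hg₂.sub hg₁).mul_continuousOn hρ.continuousOn)
            ((hρ.const_mul _).intervalIntegrable 0 C) fun x hx =>
            mul_le_mul_of_nonneg_right (hgap x hx) (expDensity_pos hc hC x).le
      _ = g₂ C - g₁ C := by
          rw [intervalIntegral.integral_const_mul, integral_expDensity hc.ne' hC.ne', mul_one]
  simp only [sub_mul] at hint
  rw [intervalIntegral.integral_sub (hg₂.mul_continuousOn hρ.continuousOn)
    (hg₁.mul_continuousOn hρ.continuousOn)] at hint
  unfold pseudoCost
  nlinarith [mul_le_mul_of_nonneg_left hint (inv_pos.2 hc).le,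
    mul_le_mul_of_nonneg_right (inv_le_expDensity_self hc hC) (sub_nonneg.2 hgC)]

end PseudoCost

theorem exists_envelopes {ι : Type*} [DecidableEq ι] {u w : ι → ℝ} (t : ι) {a₁ a₂ : ℝ}
    (hut : u t ≤ a₂) (hwt : w t ≤ a₁) (ha : a₁ ≤ a₂) :
    ∃ l r : ι → ℝ, (∀ τ, min (u τ) (w τ) ≤ l τ ∧ l τ ≤ u τ ∧ l τ ≤ r τ ∧ w τ ≤ r τ ∧
      r τ ≤ max (u τ) (w τ)) ∧ u t + w t - a₂ ≤ l t ∧ r t ≤ a₁ := by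
  refine ⟨Function.update (fun τ => min (u τ) (w τ)) t (max (min (u t) (w t)) (u t + w t - a₂)),
    Function.update (fun τ => max (u τ) (w τ)) t (min a₁ (max (u t) (w t))), fun τ => ?_,
    by simp, by simp⟩
  rcases eq_or_ne τ t with rfl | hτ
  · simp only [Function.update_self]
    refine ⟨le_max_left _ _, max_le (min_le_left _ _) (by linarith), max_le ?_ ?_,
      le_min hwt (le_max_right _ _), min_le_right _ _⟩
    · exact le_min ((min_le_right _ _).trans hwt) min_le_max
    · exact le_min (by linarith) (by linarith [le_max_left (u τ) (w τ)])
  · simp only [Function.update_of_ne hτ]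
    exact ⟨le_rfl, min_le_left _ _, min_le_max, le_max_right _ _, le_rfl⟩

def IsAllocation (t : ℕ) (ahat : ℕ → ℝ) (x a : ℝ) (v : ℕ → ℝ) : Prop :=
  (∀ τ ∈ Finset.Icc 1 t, 0 ≤ v τ) ∧ (∑ τ ∈ Finset.Icc 1 t, v τ) ≤ x ∧ v t ≤ a ∧
    ∀ τ ∈ Finset.Icc 1 (t - 1), v τ ≤ ahat τ

/-- The constraints are spelled out rather than written with `IsAllocation`, so that this is
definitionally the set in the hypothesis on `G` of the theorem. -/
def allocationValues (t : ℕ) (ahat : ℕ → ℝ) (gt : ℕ → ℝ → ℝ) (x a : ℝ) : Set ℝ :=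
  {y : ℝ | ∃ v : ℕ → ℝ,
    (∀ τ ∈ Finset.Icc 1 t, 0 ≤ v τ) ∧
    (∑ τ ∈ Finset.Icc 1 t, v τ) ≤ x ∧
    v t ≤ a ∧
    (∀ τ ∈ Finset.Icc 1 (t - 1), v τ ≤ ahat τ) ∧
    y = ∑ τ ∈ Finset.Icc 1 t, gt τ (v τ)}

section Allocation

variable {t : ℕ} {ahat : ℕ → ℝ} {gt : ℕ → ℝ → ℝ} {x x' a a' : ℝ} {y : ℝ}

theorem mem_allocationValues :
    y ∈ allocationValues t ahat gt x a ↔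
      ∃ v, IsAllocation t ahat x a v ∧ y = ∑ τ ∈ Finset.Icc 1 t, gt τ (v τ) := by
  simp only [allocationValues, IsAllocation, mem_ofPred_eq, and_assoc]

theorem IsAllocation.mono {v : ℕ → ℝ} (hv : IsAllocation t ahat x a v) (hx : x ≤ x')
    (ha : a ≤ a') : IsAllocation t ahat x' a' v :=
  ⟨hv.1, hv.2.1.trans hx, hv.2.2.1.trans ha, hv.2.2.2⟩

theorem allocationValues_mono (hx : x ≤ x') (ha : a ≤ a') :
    allocationValues t ahat gt x a ⊆ allocationValues t ahat gt x' a' := fun _ hy => by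
  obtain ⟨v, hv, rfl⟩ := mem_allocationValues.1 hy
  exact mem_allocationValues.2 ⟨v, hv.mono hx ha, rfl⟩

theorem IsAllocation.exists_exchange {x₁ x₂ a₁ a₂ : ℝ} {u w : ℕ → ℝ}
    (hu : IsAllocation t ahat x₁ a₂ u) (hw : IsAllocation t ahat x₂ a₁ w) (hx : x₁ ≤ x₂)
    (ha : a₁ ≤ a₂) :
    ∃ p, IsAllocation t ahat x₁ a₁ p ∧ IsAllocation t ahat x₂ a₂ (u + w - p) ∧
      ∀ τ, p τ ∈ segment ℝ (u τ) (w τ) := by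
  obtain ⟨hu0, huS, hut, huA⟩ := hu
  obtain ⟨hw0, hwS, hwt, hwA⟩ := hw
  obtain ⟨l, r, henv, hlt, hrt⟩ := exists_envelopes t hut hwt ha
  simp only [forall_and] at henv
  obtain ⟨hminl, hlu, hlr, hwr, hrmax⟩ := henv
  set s := Finset.Icc 1 t
  set T := max (∑ τ ∈ s, u τ + ∑ τ ∈ s, w τ - x₂) (∑ τ ∈ s, l τ)
  obtain ⟨p, hp, hpS⟩ := exists_forall_mem_Icc_sum_eq s hlr (T := T) (le_max_right _ _)
    (max_le (by linarith [Finset.sum_le_sum fun τ (_ : τ ∈ s) => hwr τ])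
      (Finset.sum_le_sum fun τ _ => hlr τ))
  have hpmm : ∀ τ, min (u τ) (w τ) ≤ p τ ∧ p τ ≤ max (u τ) (w τ) := fun τ =>
    ⟨(hminl τ).trans (hp τ).1, (hp τ).2.trans (hrmax τ)⟩
  have hqmm : ∀ τ, min (u τ) (w τ) ≤ (u + w - p) τ ∧ (u + w - p) τ ≤ max (u τ) (w τ) := by
    intro τ
    have := min_add_max (u τ) (w τ)
    simp only [Pi.sub_apply, Pi.add_apply]
    constructor <;> linarith [hpmm τ]
  have hqS : ∑ τ ∈ s, (u + w - p) τ = ∑ τ ∈ s, u τ + ∑ τ ∈ s, w τ - T := by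
    simp only [Pi.sub_apply, Pi.add_apply, Finset.sum_sub_distrib, Finset.sum_add_distrib, hpS]
  have h0 : ∀ τ ∈ s, 0 ≤ min (u τ) (w τ) := fun τ hτ => le_min (hu0 τ hτ) (hw0 τ hτ)
  have hA : ∀ τ ∈ Finset.Icc 1 (t - 1), max (u τ) (w τ) ≤ ahat τ := fun τ hτ =>
    max_le (huA τ hτ) (hwA τ hτ)
  refine ⟨p, ⟨fun τ hτ => (h0 τ hτ).trans (hpmm τ).1, ?_, (hp t).2.trans hrt,
    fun τ hτ => (hpmm τ).2.trans (hA τ hτ)⟩, ⟨fun τ hτ => (h0 τ hτ).trans (hqmm τ).1, ?_, ?_,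
    fun τ hτ => (hqmm τ).2.trans (hA τ hτ)⟩, fun τ => segment_eq_uIcc (u τ) (w τ) ▸ hpmm τ⟩
  · rw [hpS]
    exact max_le (by linarith) ((Finset.sum_le_sum fun τ _ => hlu τ).trans huS)
  · rw [hqS]
    linarith [le_max_left (∑ τ ∈ s, u τ + ∑ τ ∈ s, w τ - x₂) (∑ τ ∈ s, l τ)]
  · simp only [Pi.sub_apply, Pi.add_apply]
    linarith [(hp t).1]

variable {G : ℝ → ℝ → ℝ}
  (hG : ∀ x a, 0 ≤ x → 0 ≤ a → IsGreatest (allocationValues t ahat gt x a) (G x a))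
include hG

theorem optimum_mono (hx : 0 ≤ x) (hxx' : x ≤ x') (ha : 0 ≤ a) (haa' : a ≤ a') :
    G x a ≤ G x' a' :=
  (hG x' a' (hx.trans hxx') (ha.trans haa')).2
    (allocationValues_mono hxx' haa' (hG x a hx ha).1)

theorem optimum_zero_left (hg0 : ∀ τ ∈ Finset.Icc 1 t, gt τ 0 = 0) (ha : 0 ≤ a) : G 0 a = 0 := by
  obtain ⟨v, ⟨hv0, hvS, -⟩, hGv⟩ := mem_allocationValues.1 (hG 0 a le_rfl ha).1
  have hv : ∀ τ ∈ Finset.Icc 1 t, v τ = 0 :=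
    (Finset.sum_eq_zero_iff_of_nonneg hv0).1 (le_antisymm hvS (Finset.sum_nonneg hv0))
  rw [hGv]
  exact Finset.sum_eq_zero fun τ hτ => by rw [hv τ hτ, hg0 τ hτ]

theorem optimum_supermodular (hconc : ∀ τ ∈ Finset.Icc 1 t, ConcaveOn ℝ (Ici 0) (gt τ))
    {x₁ x₂ a₁ a₂ : ℝ} (hx₁ : 0 ≤ x₁) (hx : x₁ ≤ x₂) (ha₁ : 0 ≤ a₁) (ha : a₁ ≤ a₂) :
    G x₁ a₂ + G x₂ a₁ ≤ G x₁ a₁ + G x₂ a₂ := by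
  have hx₂ := hx₁.trans hx
  have ha₂ := ha₁.trans ha
  obtain ⟨u, hu, hGu⟩ := mem_allocationValues.1 (hG x₁ a₂ hx₁ ha₂).1
  obtain ⟨w, hw, hGw⟩ := mem_allocationValues.1 (hG x₂ a₁ hx₂ ha₁).1
  obtain ⟨p, hp, hq, hpuw⟩ := hu.exists_exchange hw hx ha
  have hGp := (hG x₁ a₁ hx₁ ha₁).2 (mem_allocationValues.2 ⟨p, hp, rfl⟩)
  have hGq := (hG x₂ a₂ hx₂ ha₂).2 (mem_allocationValues.2 ⟨u + w - p, hq, rfl⟩)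
  have hsum : ∑ τ ∈ Finset.Icc 1 t, gt τ (u τ) + ∑ τ ∈ Finset.Icc 1 t, gt τ (w τ) ≤
      ∑ τ ∈ Finset.Icc 1 t, gt τ (p τ) + ∑ τ ∈ Finset.Icc 1 t, gt τ ((u + w - p) τ) := by
    simp only [← Finset.sum_add_distrib]
    exact Finset.sum_le_sum fun τ hτ =>
      (hconc τ hτ).add_le_add_sub_of_mem_segment (hu.1 τ hτ) (hw.1 τ hτ) (hpuw τ)
  linarith

end Allocation

theorem stmt_13_general (t : ℕ) (C π : ℝ) (hC : 0 < C) (hπ : 1 ≤ π)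
    (ahat : ℕ → ℝ)
    (gt : ℕ → ℝ → ℝ)
    (hconc : ∀ τ ∈ Finset.Icc 1 t, ConcaveOn ℝ (Set.Ici 0) (gt τ))
    (hg0 : ∀ τ ∈ Finset.Icc 1 t, gt τ 0 = 0)
    (G : ℝ → ℝ → ℝ)
    (hG : ∀ x a : ℝ, 0 ≤ x → 0 ≤ a →
      IsGreatest {y : ℝ | ∃ v : ℕ → ℝ,
        (∀ τ ∈ Finset.Icc 1 t, 0 ≤ v τ) ∧
        (∑ τ ∈ Finset.Icc 1 t, v τ) ≤ x ∧
        v t ≤ a ∧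
        (∀ τ ∈ Finset.Icc 1 (t - 1), v τ ≤ ahat τ) ∧
        y = ∑ τ ∈ Finset.Icc 1 t, gt τ (v τ)} (G x a))
    (f : ℝ → ℝ)
    (hf : ∀ x : ℝ, f x = (1 / (π * C)) * Real.exp (x / (π * C)) / (Real.exp (1 / π) - 1))
    (Ψ : ℝ → ℝ)
    (hΨ : ∀ a : ℝ, Ψ a = f C * G C a - (1 / (π * C)) * ∫ x in (0:ℝ)..C, G x a * f x) :
    (∀ a : ℝ, 0 ≤ a → ∀ G' : ℝ → ℝ,
      (∀ x ∈ Set.Icc (0:ℝ) C, HasDerivWithinAt (fun x => G x a) (G' x) (Set.Icc 0 C) x) →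
      Ψ a = ∫ x in (0:ℝ)..C, f x * G' x) ∧
    MonotoneOn Ψ (Set.Ici 0) := by
  have hc : 0 < π * C := mul_pos (by linarith) hC
  obtain rfl : f = expDensity (π * C) C := funext fun x => by
    rw [hf, expDensity, show C / (π * C) = 1 / π by field_simp,
      ← div_div (Real.exp (x / (π * C)))]
    ring
  have hΨ' : ∀ a, Ψ a = pseudoCost (π * C) C (fun x => G x a) := fun a => by
    rw [hΨ, pseudoCost, one_div]
  have hmono : ∀ a, 0 ≤ a → MonotoneOn (fun x => G x a) (Icc 0 C) := fun a ha x hx y _ hxy =>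
    optimum_mono hG hx.1 hxy ha le_rfl
  have hint : ∀ a, 0 ≤ a → IntervalIntegrable (fun x => G x a) volume 0 C := fun a ha =>
    (uIcc_of_le hC.le ▸ hmono a ha).intervalIntegrable
  refine ⟨fun a ha G' hG' => ?_, fun a₁ ha₁ a₂ ha₂ ha => ?_⟩
  · rw [hΨ']
    exact pseudoCost_eq_integral_mul_deriv hC.le hG'
      (intervalIntegrable_deriv_of_monotoneOn hC.le (hmono a ha) hG') (optimum_zero_left hG hg0 ha)
  · rw [hΨ', hΨ']
    refine pseudoCost_mono hc hC (hint a₁ ha₁) (hint a₂ ha₂) (fun x hx => ?_)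
      (optimum_mono hG hC.le le_rfl ha₁ ha)
    linarith [optimum_supermodular hG hconc hx.1 hx.2 ha₁ ha]

theorem stmt_13 (t : ℕ) (ht : 1 ≤ t) (C π : ℝ) (hC : 0 < C) (hπ : 1 ≤ π)
    (ahat : ℕ → ℝ) (hahat : ∀ τ ∈ Finset.Icc 1 (t - 1), 0 ≤ ahat τ)
    (gt : ℕ → ℝ → ℝ)
    (hconc : ∀ τ ∈ Finset.Icc 1 t, ConcaveOn ℝ (Set.Ici 0) (gt τ))
    (hmono : ∀ τ ∈ Finset.Icc 1 t, StrictMonoOn (gt τ) (Set.Ici 0))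
    (hg0 : ∀ τ ∈ Finset.Icc 1 t, gt τ 0 = 0)
    (G : ℝ → ℝ → ℝ)
    (hG : ∀ x a : ℝ, 0 ≤ x → 0 ≤ a →
      IsGreatest {y : ℝ | ∃ v : ℕ → ℝ,
        (∀ τ ∈ Finset.Icc 1 t, 0 ≤ v τ) ∧
        (∑ τ ∈ Finset.Icc 1 t, v τ) ≤ x ∧
        v t ≤ a ∧
        (∀ τ ∈ Finset.Icc 1 (t - 1), v τ ≤ ahat τ) ∧
        y = ∑ τ ∈ Finset.Icc 1 t, gt τ (v τ)} (G x a))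
    (f : ℝ → ℝ)
    (hf : ∀ x : ℝ, f x = (1 / (π * C)) * Real.exp (x / (π * C)) / (Real.exp (1 / π) - 1))
    (Ψ : ℝ → ℝ)
    (hΨ : ∀ a : ℝ, Ψ a = f C * G C a - (1 / (π * C)) * ∫ x in (0:ℝ)..C, G x a * f x) :
    (∀ a : ℝ, 0 ≤ a → ∀ G' : ℝ → ℝ,
      (∀ x ∈ Set.Icc (0:ℝ) C, HasDerivWithinAt (fun x => G x a) (G' x) (Set.Icc 0 C) x) →
      Ψ a = ∫ x in (0:ℝ)..C, f x * G' x) ∧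
    MonotoneOn Ψ (Set.Ici 0) :=
  stmt_13_general t C π hC hπ ahat gt hconc hg0 G hG f hf Ψ hΨ
end
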